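/- Let (X,ρ,W) be a uniformly convex hyperbolic space with modulus η such that η(·,ε) is non-increasing in r for each fixed ε. Let C ⊆ X be nonempty convex, T : C → C nonexpansive, (λ_n) ⊆ [0,1], (x_n) the Krasnoselski–Mann iteration from x ∈ C. Suppose x,y ∈ C, n ∈ ℕ, and γ, β, β̃, a > 0 satisfy γ ≤ ρ(x_n,y) + ρ(y,Ty) ≤ β, ρ(x_n,y) + ρ(y,Ty) ≤ β̃, and a ≤ ρ(x_n, T x_n). Then ρ(x_{n+1}, y) ≤ ρ(x_n, y) + ρ(y, Ty) − 2γλ_n(1−λ_n)·η(β̃, a/β). -/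
import Mathlib

section Aux

variable {X : Type*} [MetricSpace X] {W : X → X → ℝ → X}

private lemma W_zero
    (W1 : ∀ x y z : X, ∀ l : ℝ, l ∈ Set.Icc (0:ℝ) 1 →
      dist z (W x y l) ≤ (1 - l) * dist z x + l * dist z y)
    (x y : X) : W x y 0 = x := by
  have h := W1 x y x 0 (by norm_num)
  simp at h
  exact h.symm

private lemma W_one
    (W1 : ∀ x y z : X, ∀ l : ℝ, l ∈ Set.Icc (0:ℝ) 1 →
      dist z (W x y l) ≤ (1 - l) * dist z x + l * dist z y)
    (x y : X) : W x y 1 = y := by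
  have h := W1 x y y 1 (by norm_num)
  simp at h
  exact h.symm

private lemma dist_left
    (W1 : ∀ x y z : X, ∀ l : ℝ, l ∈ Set.Icc (0:ℝ) 1 →
      dist z (W x y l) ≤ (1 - l) * dist z x + l * dist z y)
    (W2 : ∀ x y : X, ∀ l l' : ℝ, l ∈ Set.Icc (0:ℝ) 1 → l' ∈ Set.Icc (0:ℝ) 1 →
      dist (W x y l) (W x y l') = |l - l'| * dist x y)
    (x y : X) (l : ℝ) (hl : l ∈ Set.Icc (0:ℝ) 1) :
    dist x (W x y l) = l * dist x y := by
  have h := W2 x y 0 l (by norm_num) hl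
  rw [W_zero W1] at h
  rw [h, abs_of_nonpos (by linarith [hl.1])]
  ring

private lemma dist_right
    (W1 : ∀ x y z : X, ∀ l : ℝ, l ∈ Set.Icc (0:ℝ) 1 →
      dist z (W x y l) ≤ (1 - l) * dist z x + l * dist z y)
    (W2 : ∀ x y : X, ∀ l l' : ℝ, l ∈ Set.Icc (0:ℝ) 1 → l' ∈ Set.Icc (0:ℝ) 1 →
      dist (W x y l) (W x y l') = |l - l'| * dist x y)
    (x y : X) (l : ℝ) (hl : l ∈ Set.Icc (0:ℝ) 1) :
    dist (W x y l) y = (1 - l) * dist x y := by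
  have h := W2 x y l 1 hl (by norm_num)
  rw [W_one W1] at h
  rw [h, abs_of_nonpos (by linarith [hl.2])]
  ring

/-- Uniqueness of points strictly between `x` and `m` at prescribed distances,
in a uniformly convex space. -/
private lemma unique_between
    (η : ℝ → ℝ → ℝ)
    (hη : ∀ r ε : ℝ, 0 < r → ε ∈ Set.Ioc (0:ℝ) 2 → η r ε ∈ Set.Ioc (0:ℝ) 1)
    (hmod : ∀ r ε : ℝ, ∀ a u v : X, 0 < r → ε ∈ Set.Ioc (0:ℝ) 2 →
      dist u a ≤ r → dist v a ≤ r → ε * r ≤ dist u v →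
      dist (W u v (1/2)) a ≤ (1 - η r ε) * r)
    {x m z z' : X} {δ δ' : ℝ} (hδ : 0 ≤ δ) (hδ' : 0 ≤ δ')
    (h1 : dist x z ≤ δ) (h2 : dist z m ≤ δ')
    (h3 : dist x z' ≤ δ) (h4 : dist z' m ≤ δ')
    (hsum : δ + δ' ≤ dist x m) : z = z' := by
  rcases eq_or_lt_of_le hδ with h0 | hδpos
  · have hz : z = x := by
      have : dist x z ≤ 0 := by rw [← h0] at h1; exact h1
      exact (dist_le_zero.mp this).symm
    have hz' : z' = x := by
      have : dist x z' ≤ 0 := by rw [← h0] at h3; exact h3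
      exact (dist_le_zero.mp this).symm
    rw [hz, hz']
  rcases eq_or_lt_of_le hδ' with h0' | hδ'pos
  · have hz : z = m := by
      have : dist z m ≤ 0 := by rw [← h0'] at h2; exact h2
      exact dist_le_zero.mp this
    have hz' : z' = m := by
      have : dist z' m ≤ 0 := by rw [← h0'] at h4; exact h4
      exact dist_le_zero.mp this
    rw [hz, hz']
  by_contra hne
  have hD : 0 < dist z z' := dist_pos.mpr hne
  set ε1 := min (dist z z' / δ) 2 with hε1def
  set ε2 := min (dist z z' / δ') 2 with hε2def
  have hε1 : ε1 ∈ Set.Ioc (0:ℝ) 2 :=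
    ⟨lt_min (div_pos hD hδpos) two_pos, min_le_right _ _⟩
  have hε2 : ε2 ∈ Set.Ioc (0:ℝ) 2 :=
    ⟨lt_min (div_pos hD hδ'pos) two_pos, min_le_right _ _⟩
  have hle1 : ε1 * δ ≤ dist z z' := by
    calc ε1 * δ ≤ (dist z z' / δ) * δ :=
          mul_le_mul_of_nonneg_right (min_le_left _ _) hδ
    _ = dist z z' := div_mul_cancel₀ _ (ne_of_gt hδpos)
  have hle2 : ε2 * δ' ≤ dist z z' := by
    calc ε2 * δ' ≤ (dist z z' / δ') * δ' :=
          mul_le_mul_of_nonneg_right (min_le_left _ _) hδ'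
    _ = dist z z' := div_mul_cancel₀ _ (ne_of_gt hδ'pos)
  have hm1 := hmod δ ε1 x z z' hδpos hε1 (by rwa [dist_comm]) (by rwa [dist_comm]) hle1
  have hm2 := hmod δ' ε2 m z z' hδ'pos hε2 h2 h4 hle2
  have hpos1 : 0 < η δ ε1 := (hη δ ε1 hδpos hε1).1
  have hpos2 : 0 < η δ' ε2 := (hη δ' ε2 hδ'pos hε2).1
  have htri : dist x m ≤ dist (W z z' (1/2)) x + dist (W z z' (1/2)) m := by
    rw [dist_comm (W z z' (1/2)) x]; exact dist_triangle _ _ _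
  nlinarith [mul_pos hpos1 hδpos, mul_pos hpos2 hδ'pos]

/-- Uniform convexity estimate for `l ∈ [0, 1/2]`. -/
private lemma uc_half
    (W1 : ∀ x y z : X, ∀ l : ℝ, l ∈ Set.Icc (0:ℝ) 1 →
      dist z (W x y l) ≤ (1 - l) * dist z x + l * dist z y)
    (W2 : ∀ x y : X, ∀ l l' : ℝ, l ∈ Set.Icc (0:ℝ) 1 → l' ∈ Set.Icc (0:ℝ) 1 →
      dist (W x y l) (W x y l') = |l - l'| * dist x y)
    (η : ℝ → ℝ → ℝ)
    (hη : ∀ r ε : ℝ, 0 < r → ε ∈ Set.Ioc (0:ℝ) 2 → η r ε ∈ Set.Ioc (0:ℝ) 1)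
    (hmod : ∀ r ε : ℝ, ∀ a u v : X, 0 < r → ε ∈ Set.Ioc (0:ℝ) 2 →
      dist u a ≤ r → dist v a ≤ r → ε * r ≤ dist u v →
      dist (W u v (1/2)) a ≤ (1 - η r ε) * r)
    (r ε : ℝ) (a u v : X) (hr : 0 < r) (hε : ε ∈ Set.Ioc (0:ℝ) 2)
    (h1 : dist u a ≤ r) (h2 : dist v a ≤ r) (h3 : ε * r ≤ dist u v)
    (l : ℝ) (hl0 : 0 ≤ l) (hl2 : l ≤ 1/2) :
    dist (W u v l) a ≤ (1 - 2 * l * η r ε) * r := by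
  have hl1 : l ∈ Set.Icc (0:ℝ) 1 := ⟨hl0, by linarith⟩
  have hhalf : (1/2:ℝ) ∈ Set.Icc (0:ℝ) 1 := by norm_num
  have h2l : (2*l) ∈ Set.Icc (0:ℝ) 1 := ⟨by linarith, by linarith⟩
  have hm := hmod r ε a u v hr hε h1 h2 h3
  have hum : dist u (W u v (1/2)) = (1/2) * dist u v := dist_left W1 W2 u v _ hhalf
  have hcoh : W u v l = W u (W u v (1/2)) (2*l) := by
    apply unique_between η hη hmod (x := u) (m := W u v (1/2))
      (δ := l * dist u v) (δ' := (1/2 - l) * dist u v)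
      (mul_nonneg hl0 dist_nonneg) (mul_nonneg (by linarith) dist_nonneg)
    · exact le_of_eq (dist_left W1 W2 u v l hl1)
    · have h := W2 u v l (1/2) hl1 hhalf
      rw [h, abs_of_nonpos (by linarith)]
      apply le_of_eq; ring
    · have h := dist_left W1 W2 u (W u v (1/2)) (2*l) h2l
      rw [h, hum]
      apply le_of_eq; ring
    · have h := dist_right W1 W2 u (W u v (1/2)) (2*l) h2l
      rw [h, hum]
      apply le_of_eq; ring
    · rw [hum]; apply le_of_eq; ring
  rw [hcoh]
  have hW := W1 u (W u v (1/2)) a (2*l) h2l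
  rw [dist_comm a u, dist_comm a (W u v (1/2))] at hW
  rw [dist_comm]
  have e1 : (1 - 2*l) * dist u a ≤ (1 - 2*l) * r :=
    mul_le_mul_of_nonneg_left h1 (by linarith)
  have e2 : (2*l) * dist (W u v (1/2)) a ≤ (2*l) * ((1 - η r ε) * r) :=
    mul_le_mul_of_nonneg_left hm (by linarith)
  nlinarith

/-- Uniform convexity estimate for general `l ∈ [0,1]`. -/
private lemma uc_general
    (W1 : ∀ x y z : X, ∀ l : ℝ, l ∈ Set.Icc (0:ℝ) 1 →
      dist z (W x y l) ≤ (1 - l) * dist z x + l * dist z y)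
    (W2 : ∀ x y : X, ∀ l l' : ℝ, l ∈ Set.Icc (0:ℝ) 1 → l' ∈ Set.Icc (0:ℝ) 1 →
      dist (W x y l) (W x y l') = |l - l'| * dist x y)
    (W3 : ∀ x y : X, ∀ l : ℝ, l ∈ Set.Icc (0:ℝ) 1 → W x y l = W y x (1 - l))
    (η : ℝ → ℝ → ℝ)
    (hη : ∀ r ε : ℝ, 0 < r → ε ∈ Set.Ioc (0:ℝ) 2 → η r ε ∈ Set.Ioc (0:ℝ) 1)
    (hmod : ∀ r ε : ℝ, ∀ a u v : X, 0 < r → ε ∈ Set.Ioc (0:ℝ) 2 →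
      dist u a ≤ r → dist v a ≤ r → ε * r ≤ dist u v →
      dist (W u v (1/2)) a ≤ (1 - η r ε) * r)
    (r ε : ℝ) (a u v : X) (hr : 0 < r) (hε : ε ∈ Set.Ioc (0:ℝ) 2)
    (h1 : dist u a ≤ r) (h2 : dist v a ≤ r) (h3 : ε * r ≤ dist u v)
    (l : ℝ) (hl : l ∈ Set.Icc (0:ℝ) 1) :
    dist (W u v l) a ≤ (1 - 2 * l * (1 - l) * η r ε) * r := by
  have hη1 := hη r ε hr hε
  rcases le_or_gt l (1/2) with hc | hc
  · have h := uc_half W1 W2 η hη hmod r ε a u v hr hε h1 h2 h3 l hl.1 hc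
    refine h.trans ?_
    nlinarith [hη1.1.le, hr.le, hl.1, mul_nonneg (mul_nonneg (mul_nonneg hl.1 hl.1) hη1.1.le) hr.le]
  · rw [W3 u v l hl]
    have h3' : ε * r ≤ dist v u := by rwa [dist_comm]
    have h := uc_half W1 W2 η hη hmod r ε a v u hr hε h2 h1 h3' (1-l)
      (by linarith [hl.2]) (by linarith [hc.le])
    refine h.trans ?_
    nlinarith [hη1.1.le, hr.le, hl.2,
      mul_nonneg (mul_nonneg (mul_nonneg (by linarith [hl.2] : (0:ℝ) ≤ 1 - l)
        (by linarith [hl.2] : (0:ℝ) ≤ 1 - l)) hη1.1.le) hr.le]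

end Aux

theorem stmt_8
    {X : Type*} [MetricSpace X]
    (W : X → X → ℝ → X)
    (W1 : ∀ x y z : X, ∀ l : ℝ, l ∈ Set.Icc (0:ℝ) 1 →
      dist z (W x y l) ≤ (1 - l) * dist z x + l * dist z y)
    (W2 : ∀ x y : X, ∀ l l' : ℝ, l ∈ Set.Icc (0:ℝ) 1 → l' ∈ Set.Icc (0:ℝ) 1 →
      dist (W x y l) (W x y l') = |l - l'| * dist x y)
    (W3 : ∀ x y : X, ∀ l : ℝ, l ∈ Set.Icc (0:ℝ) 1 → W x y l = W y x (1 - l))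
    (W4 : ∀ x y z w : X, ∀ l : ℝ, l ∈ Set.Icc (0:ℝ) 1 →
      dist (W x z l) (W y w l) ≤ (1 - l) * dist x y + l * dist z w)
    (η : ℝ → ℝ → ℝ)
    (hη : ∀ r ε : ℝ, 0 < r → ε ∈ Set.Ioc (0:ℝ) 2 → η r ε ∈ Set.Ioc (0:ℝ) 1)
    (hmod : ∀ r ε : ℝ, ∀ a u v : X, 0 < r → ε ∈ Set.Ioc (0:ℝ) 2 →
      dist u a ≤ r → dist v a ≤ r → ε * r ≤ dist u v →
      dist (W u v (1/2)) a ≤ (1 - η r ε) * r)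
    (hdec : ∀ r s ε : ℝ, 0 < r → r ≤ s → ε ∈ Set.Ioc (0:ℝ) 2 → η s ε ≤ η r ε)
    (C : Set X) (hCne : C.Nonempty)
    (hconv : ∀ u ∈ C, ∀ v ∈ C, ∀ l : ℝ, l ∈ Set.Icc (0:ℝ) 1 → W u v l ∈ C)
    (T : X → X) (hT : ∀ u ∈ C, T u ∈ C)
    (hTne : ∀ u ∈ C, ∀ v ∈ C, dist (T u) (T v) ≤ dist u v)
    (lam : ℕ → ℝ) (hlam : ∀ n, lam n ∈ Set.Icc (0:ℝ) 1)
    (x : X) (hx : x ∈ C)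
    (xseq : ℕ → X) (hx0 : xseq 0 = x)
    (hxs : ∀ n, xseq (n + 1) = W (xseq n) (T (xseq n)) (lam n))
    : ∀ y ∈ C, ∀ n : ℕ, ∀ γ β βt a : ℝ,
      0 < γ → 0 < β → 0 < βt → 0 < a →
      γ ≤ dist (xseq n) y + dist y (T y) →
      dist (xseq n) y + dist y (T y) ≤ β →
      dist (xseq n) y + dist y (T y) ≤ βt →
      a ≤ dist (xseq n) (T (xseq n)) →
      dist (xseq (n + 1)) y ≤
        dist (xseq n) y + dist y (T y) - 2 * γ * lam n * (1 - lam n) * η βt (a / β) := by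
  have hmem : ∀ n, xseq n ∈ C := by
    intro n
    induction n with
    | zero => rwa [hx0]
    | succ k ih => rw [hxs]; exact hconv _ ih _ (hT _ ih) _ (hlam k)
  intro y hy n γ β βt a hγ hβ hβt ha hg1 hg2 hg3 hg4
  set u := xseq n with hu
  set s := dist u y + dist y (T y) with hs
  have hspos : 0 < s := lt_of_lt_of_le hγ hg1
  have hTuy : dist (T u) y ≤ s := by
    calc dist (T u) y ≤ dist (T u) (T y) + dist (T y) y := dist_triangle _ _ _
    _ ≤ dist u y + dist (T y) y := by
        have := hTne u (hmem n) y hy; linarith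
    _ = s := by rw [hs, dist_comm (T y) y]
  have huy : dist u y ≤ s := by
    have : 0 ≤ dist y (T y) := dist_nonneg
    linarith
  have hε : a / β ∈ Set.Ioc (0:ℝ) 2 := by
    constructor
    · exact div_pos ha hβ
    · rw [div_le_iff₀ hβ]
      have htr : dist u (T u) ≤ dist u y + dist y (T y) + dist (T y) (T u) :=
        dist_triangle4 _ _ _ _
      have hne := hTne y hy u (hmem n)
      rw [dist_comm y u] at hne
      have : dist u (T u) ≤ 2 * s := by
        have : 0 ≤ dist u y := dist_nonneg
        linarith
      linarith
  have h3 : (a / β) * s ≤ dist u (T u) := by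
    calc (a / β) * s ≤ (a / β) * β :=
          mul_le_mul_of_nonneg_left hg2 (le_of_lt (div_pos ha hβ))
    _ = a := div_mul_cancel₀ _ (ne_of_gt hβ)
    _ ≤ dist u (T u) := hg4
  have key := uc_general W1 W2 W3 η hη hmod s (a/β) y u (T u) hspos hε huy hTuy h3
    (lam n) (hlam n)
  rw [hxs n, ← hu]
  refine key.trans ?_
  have hηs := hη s (a/β) hspos hε
  have hηβ := hη βt (a/β) hβt hε
  have hmono : η βt (a/β) ≤ η s (a/β) := hdec s βt (a/β) hspos hg3 hε
  have hlam0 := (hlam n).1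
  have hlam1 := (hlam n).2
  have hfac : 0 ≤ 2 * lam n * (1 - lam n) := by nlinarith
  -- (1 - 2l(1-l)η(s))s = s - 2l(1-l)η(s)s ≤ s - 2γl(1-l)η(βt)
  have h5 : 2 * γ * lam n * (1 - lam n) * η βt (a/β) ≤
      2 * lam n * (1 - lam n) * η s (a/β) * s := by
    have e1 : 2 * γ * lam n * (1 - lam n) * η βt (a/β)
        = (2 * lam n * (1 - lam n)) * (γ * η βt (a/β)) := by ring
    have e2 : 2 * lam n * (1 - lam n) * η s (a/β) * s
        = (2 * lam n * (1 - lam n)) * (s * η s (a/β)) := by ring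
    rw [e1, e2]
    apply mul_le_mul_of_nonneg_left _ hfac
    calc γ * η βt (a/β) ≤ s * η βt (a/β) :=
          mul_le_mul_of_nonneg_right hg1 hηβ.1.le
    _ ≤ s * η s (a/β) := mul_le_mul_of_nonneg_left hmono hspos.le
  nlinarith [h5]
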